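/- Let μ > 0, u⁻(x,y,z) = (2yz, −xz, −xy), u⁺(x,y,z) = (2yz, −xz, −xy)/(x²+y²+z²), p⁻(x,y,z) = cos(x)·sin(y+z), p⁺ ≡ 0, and define the stress tensors σ⁺(x) = −p⁺(x)·I + (Du⁺(x) + Du⁺(x)*) and σ⁻(x) = −p⁻(x)·I + μ·(Du⁻(x) + Du⁻(x)*). Then for every point v = (x,y,z) ∈ ℝ³ with ‖v‖ = 1: σ⁺(v)v − σ⁻(v)v = f(v), where f(x,y,z) = (−2(1+μ)yz + x·cos(x)·sin(y+z), (1+μ)xz + y·cos(x)·sin(y+z), (1+μ)xy + z·cos(x)·sin(y+z)). -/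

import Mathlib

open RealInnerProductSpace

noncomputable section

abbrev E3 := EuclideanSpace ℝ (Fin 3)

/-- The interior analytic test velocity `u⁻(x,y,z) = (2yz, −xz, −xy)`. -/
def uInner : E3 → E3 := fun x => !₂[2 * x 1 * x 2, -(x 0 * x 2), -(x 0 * x 1)]

/-- The exterior analytic test velocity `u⁺(x,y,z) = (2yz, −xz, −xy)/(x²+y²+z²)`. -/
def uOuter : E3 → E3 := fun x =>
  (x 0 ^ 2 + x 1 ^ 2 + x 2 ^ 2)⁻¹ •
    (!₂[2 * x 1 * x 2, -(x 0 * x 2), -(x 0 * x 1)] : E3)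

/-- The interior analytic test pressure `p⁻(x,y,z) = cos(x) sin(y+z)`. -/
def pInner : E3 → ℝ := fun x => Real.cos (x 0) * Real.sin (x 1 + x 2)

/-- The exterior analytic test pressure `p⁺ ≡ 0`. -/
def pOuter : E3 → ℝ := fun _ => 0

/-- The singular interface force of the analytic test case (inner viscosity `μ`,
outer viscosity `1`). -/
def singularF (μ : ℝ) : E3 → E3 := fun v =>
  !₂[-(2 * (1 + μ) * v 1 * v 2) + v 0 * Real.cos (v 0) * Real.sin (v 1 + v 2),
    (1 + μ) * v 0 * v 2 + v 1 * Real.cos (v 0) * Real.sin (v 1 + v 2),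
    (1 + μ) * v 0 * v 1 + v 2 * Real.cos (v 0) * Real.sin (v 1 + v 2)]

namespace TractionAux

def P (i : Fin 3) : E3 →L[ℝ] ℝ := EuclideanSpace.proj i

lemma hP (i : Fin 3) (v : E3) : HasFDerivAt (fun y : E3 => y i) (P i) v :=
  (P i).hasFDerivAt

/-- The continuous linear map on `E3` with columns `a`, `b`, `c`. -/
def mk3 (a b c : E3) : E3 →L[ℝ] E3 :=
  (P 0).smulRight a + (P 1).smulRight b + (P 2).smulRight c

lemma mk3_apply (a b c : E3) (w : E3) :
    mk3 a b c w = w 0 • a + w 1 • b + w 2 • c := by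
  simp [mk3, P]

lemma mk3_adjoint (a b c : E3) :
    ContinuousLinearMap.adjoint (mk3 a b c)
      = mk3 (!₂[a 0, b 0, c 0] : E3) (!₂[a 1, b 1, c 1] : E3) (!₂[a 2, b 2, c 2] : E3) := by
  refine (((ContinuousLinearMap.eq_adjoint_iff _ _).2 fun x y => ?_)).symm
  simp only [PiLp.inner_apply, RCLike.inner_apply, starRingEnd_apply, star_trivial,
    Fin.sum_univ_three, mk3_apply]
  simp
  ring

lemma hasFDerivAt_uInner (v : E3) :
    HasFDerivAt uInner
      (mk3 (!₂[0, -(v 2), -(v 1)] : E3) (!₂[2 * v 2, 0, -(v 0)] : E3)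
        (!₂[2 * v 1, -(v 0), 0] : E3)) v := by
  have h0 : HasFDerivAt (fun x : E3 => 2 * x 1 * x 2)
      ((2 * v 1) • P 2 + (v 2 * 2) • P 1) v := by
    simpa [Pi.mul_def, mul_assoc, smul_smul] using (((hP 1 v).const_mul (2:ℝ)).mul (hP 2 v))
  have h1 : HasFDerivAt (fun x : E3 => -(x 0 * x 2))
      (-(v 0 • P 2 + v 2 • P 0)) v := ((hP 0 v).mul (hP 2 v)).neg
  have h2 : HasFDerivAt (fun x : E3 => -(x 0 * x 1))
      (-(v 0 • P 1 + v 1 • P 0)) v := ((hP 0 v).mul (hP 1 v)).neg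
  set φ' : Fin 3 → (E3 →L[ℝ] ℝ) :=
    ![(2 * v 1) • P 2 + (v 2 * 2) • P 1, -(v 0 • P 2 + v 2 • P 0),
      -(v 0 • P 1 + v 1 • P 0)] with hφ
  have key' : HasFDerivAt
      (fun x : E3 => (![2 * x 1 * x 2, -(x 0 * x 2), -(x 0 * x 1)] : Fin 3 → ℝ))
      (ContinuousLinearMap.pi φ') v := by
    rw [hasFDerivAt_pi']
    intro i
    rw [ContinuousLinearMap.proj_pi]
    fin_cases i
    · exact h0
    · exact h1
    · exact h2
  have key : HasFDerivAt uInner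
      (((PiLp.continuousLinearEquiv 2 ℝ (fun _ : Fin 3 => ℝ)).symm :
          (Fin 3 → ℝ) →L[ℝ] E3).comp (ContinuousLinearMap.pi φ')) v :=
    ((PiLp.continuousLinearEquiv 2 ℝ (fun _ : Fin 3 => ℝ)).symm.comp_hasFDerivAt_iff).2 key'
  refine key.congr_fderiv ?_
  refine ContinuousLinearMap.ext fun w => PiLp.ext fun i => ?_
  fin_cases i <;>
    simp [mk3_apply, hφ, P, Fin.sum_univ_three] <;> ring

lemma hasFDerivAt_sq (v : E3) :
    HasFDerivAt (fun x : E3 => x 0 ^ 2 + x 1 ^ 2 + x 2 ^ 2)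
      ((2 * v 0) • P 0 + (2 * v 1) • P 1 + (2 * v 2) • P 2) v := by
  have h : ∀ i : Fin 3, HasFDerivAt (fun x : E3 => x i ^ 2) ((2 * v i) • P i) v := fun i => by
    simpa [pow_one, Function.comp_def] using (hasDerivAt_pow 2 (v i)).comp_hasFDerivAt v (hP i v)
  exact ((h 0).add (h 1)).add (h 2)

lemma fderiv_uOuter (v : E3) (h1 : v 0 ^ 2 + v 1 ^ 2 + v 2 ^ 2 = 1) :
    fderiv ℝ uOuter v =
      mk3 (!₂[-(4 * v 0 * v 1 * v 2), -(v 2) + 2 * v 0 ^ 2 * v 2, -(v 1) + 2 * v 0 ^ 2 * v 1] : E3)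
        (!₂[2 * v 2 - 4 * v 1 ^ 2 * v 2, 2 * v 0 * v 1 * v 2, -(v 0) + 2 * v 0 * v 1 ^ 2] : E3)
        (!₂[2 * v 1 - 4 * v 1 * v 2 ^ 2, -(v 0) + 2 * v 0 * v 2 ^ 2, 2 * v 0 * v 1 * v 2] : E3) := by
  have hne : (v 0 ^ 2 + v 1 ^ 2 + v 2 ^ 2) ≠ 0 := by rw [h1]; norm_num
  have hinv : HasFDerivAt (fun x : E3 => (x 0 ^ 2 + x 1 ^ 2 + x 2 ^ 2)⁻¹)
      ((-((v 0 ^ 2 + v 1 ^ 2 + v 2 ^ 2) ^ 2)⁻¹) •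
        ((2 * v 0) • P 0 + (2 * v 1) • P 1 + (2 * v 2) • P 2)) v :=
    (hasDerivAt_inv hne).comp_hasFDerivAt v (hasFDerivAt_sq v)
  have hOut : HasFDerivAt uOuter
      ((v 0 ^ 2 + v 1 ^ 2 + v 2 ^ 2)⁻¹ •
          (mk3 (!₂[0, -(v 2), -(v 1)] : E3) (!₂[2 * v 2, 0, -(v 0)] : E3)
            (!₂[2 * v 1, -(v 0), 0] : E3))
        + ((-((v 0 ^ 2 + v 1 ^ 2 + v 2 ^ 2) ^ 2)⁻¹) •
            ((2 * v 0) • P 0 + (2 * v 1) • P 1 + (2 * v 2) • P 2)).smulRight (uInner v)) v :=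
    hinv.smul (hasFDerivAt_uInner v)
  rw [hOut.fderiv]
  refine ContinuousLinearMap.ext fun w => PiLp.ext fun i => ?_
  fin_cases i <;>
    simp [mk3_apply, h1, P, uInner, Fin.sum_univ_three] <;> ring

end TractionAux

open TractionAux in
/-- The traction jump condition `(σ⁺ − σ⁻)·n = f` holds on the unit sphere for the
analytic test case, where `σ⁺ = −p⁺ I + (∇u⁺ + (∇u⁺)ᵀ)` and
`σ⁻ = −p⁻ I + μ(∇u⁻ + (∇u⁻)ᵀ)`. -/
theorem test_traction_jump (μ : ℝ) (hμ : 0 < μ) (v : E3) (hv : ‖v‖ = 1) :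
    ((-(pOuter v)) • v
        + (fderiv ℝ uOuter v + ContinuousLinearMap.adjoint (fderiv ℝ uOuter v)) v)
      - ((-(pInner v)) • v
        + μ • ((fderiv ℝ uInner v + ContinuousLinearMap.adjoint (fderiv ℝ uInner v)) v))
      = singularF μ v := by
  have h1 : v 0 ^ 2 + v 1 ^ 2 + v 2 ^ 2 = 1 := by
    rw [EuclideanSpace.norm_eq, Real.sqrt_eq_one] at hv
    simpa [Fin.sum_univ_three, Real.norm_eq_abs, sq_abs] using hv
  rw [(hasFDerivAt_uInner v).fderiv, fderiv_uOuter v h1, mk3_adjoint, mk3_adjoint]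
  refine PiLp.ext fun i => ?_
  fin_cases i <;>
    simp [mk3_apply, pInner, pOuter, singularF, Fin.sum_univ_three]
  · linear_combination (-(4:ℝ) * v 1 * v 2) * h1
  · linear_combination ((2:ℝ) * v 0 * v 2) * h1
  · linear_combination ((2:ℝ) * v 0 * v 1) * h1
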